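/- Consider an almost paracontact metric Walker structure on ℝ³ with ξ₂ ≡ 0, so the constraint reads f ξ₃² + 2ξ₁ξ₃ = 1 (in particular ξ₃ vanishes nowhere); assume moreover ξ₃ > 0 everywhere (as is implicit in the paper's formula). Then the structure is paracontact metric, i.e. dη(∂i,∂j) = Φ(∂i,∂j) holds for all coordinate fields at every point, if and only if there exist smooth functions ψ, m : ℝ → ℝ such that ξ₃(x,y,z) = exp(−2y + ψ(z)) and f(x,y,z) = 2ψ′(z)·x + m(z) for all (x,y,z) ∈ ℝ³ (Theorem 4.2). -/

import Mathlib

open Real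

/-- Points of the Walker manifold `M = ℝ³` with coordinates `(x,y,z)`. -/
abbrev Pt : Type := ℝ × ℝ × ℝ

/-- Vector fields on `ℝ³`, given by their components in the frame `∂x, ∂y, ∂z`. -/
abbrev VF : Type := Pt → Pt

/-- Partial derivative ∂/∂x. -/
noncomputable def pdx (F : Pt → ℝ) (p : Pt) : ℝ := fderiv ℝ F p ((1:ℝ), (0:ℝ), (0:ℝ))

/-- Partial derivative ∂/∂y. -/
noncomputable def pdy (F : Pt → ℝ) (p : Pt) : ℝ := fderiv ℝ F p ((0:ℝ), (1:ℝ), (0:ℝ))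

/-- Partial derivative ∂/∂z. -/
noncomputable def pdz (F : Pt → ℝ) (p : Pt) : ℝ := fderiv ℝ F p ((0:ℝ), (0:ℝ), (1:ℝ))

/-- Directional derivative of a scalar function along a vector field. -/
noncomputable def dd (X : VF) (F : Pt → ℝ) (p : Pt) : ℝ := fderiv ℝ F p (X p)

/-- Components of a tangent vector. -/
def c1 (v : Pt) : ℝ := v.1
def c2 (v : Pt) : ℝ := v.2.1
def c3 (v : Pt) : ℝ := v.2.2

/-- The coordinate vector fields `∂x, ∂y, ∂z`. -/
noncomputable def E : Fin 3 → VF :=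
  ![fun _ => ((1:ℝ), (0:ℝ), (0:ℝ)), fun _ => ((0:ℝ), (1:ℝ), (0:ℝ)),
    fun _ => ((0:ℝ), (0:ℝ), (1:ℝ))]

/-- The Walker metric with `ε = 1`: `g(∂x,∂z) = g(∂z,∂x) = 1`, `g(∂y,∂y) = 1`,
`g(∂z,∂z) = f`, all other components zero. -/
noncomputable def gm (f : Pt → ℝ) (X Y : VF) (p : Pt) : ℝ :=
  c1 (X p) * c3 (Y p) + c3 (X p) * c1 (Y p) + c2 (X p) * c2 (Y p)
    + f p * c3 (X p) * c3 (Y p)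

/-- The Levi-Civita connection of the Walker metric:
`∇_{∂x}∂z = ∇_{∂z}∂x = (1/2) f_x ∂x`, `∇_{∂y}∂z = ∇_{∂z}∂y = (1/2) f_y ∂x`,
`∇_{∂z}∂z = (1/2)(f f_x + f_z) ∂x - (1/2) f_y ∂y - (1/2) f_x ∂z`, all other covariant
derivatives of coordinate fields zero, extended by `C^∞`-linearity below and the
Leibniz rule above. -/
noncomputable def cov (f : Pt → ℝ) (X Y : VF) : VF := fun p =>
  ( dd X (fun q => c1 (Y q)) p
      + (1/2) * pdx f p * (c1 (X p) * c3 (Y p) + c3 (X p) * c1 (Y p))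
      + (1/2) * pdy f p * (c2 (X p) * c3 (Y p) + c3 (X p) * c2 (Y p))
      + (1/2) * (f p * pdx f p + pdz f p) * (c3 (X p) * c3 (Y p)),
    dd X (fun q => c2 (Y q)) p - (1/2) * pdy f p * (c3 (X p) * c3 (Y p)),
    dd X (fun q => c3 (Y q)) p - (1/2) * pdx f p * (c3 (X p) * c3 (Y p)) )

/-- Lie bracket of vector fields on `ℝ³`. -/
noncomputable def brk (X Y : VF) : VF := fun p =>
  ( dd X (fun q => c1 (Y q)) p - dd Y (fun q => c1 (X q)) p,
    dd X (fun q => c2 (Y q)) p - dd Y (fun q => c2 (X q)) p,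
    dd X (fun q => c3 (Y q)) p - dd Y (fun q => c3 (X q)) p )

/-- The `(1,1)`-tensor `φ` of the almost paracontact metric Walker structure:
`φ∂x = -ξ₂∂x + ξ₃∂y`, `φ∂y = (ξ₁ + fξ₃)∂x - ξ₃∂z`, `φ∂z = -fξ₂∂x - ξ₁∂y + ξ₂∂z`. -/
noncomputable def phiV (f ξ₁ ξ₂ ξ₃ : Pt → ℝ) (X : VF) : VF := fun p =>
  ( -ξ₂ p * c1 (X p) + (ξ₁ p + f p * ξ₃ p) * c2 (X p) - f p * ξ₂ p * c3 (X p),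
    ξ₃ p * c1 (X p) - ξ₁ p * c3 (X p),
    -ξ₃ p * c2 (X p) + ξ₂ p * c3 (X p) )

/-- The 1-form `η = ξ₃ dx + ξ₂ dy + (ξ₁ + fξ₃) dz`. -/
noncomputable def etaV (f ξ₁ ξ₂ ξ₃ : Pt → ℝ) (X : VF) (p : Pt) : ℝ :=
  ξ₃ p * c1 (X p) + ξ₂ p * c2 (X p) + (ξ₁ p + f p * ξ₃ p) * c3 (X p)

/-- The structure tensor `F(X,Y,Z) = g((∇_X φ)Y, Z)`, `(∇_X φ)Y = ∇_X(φY) - φ(∇_X Y)`. -/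
noncomputable def Ften (f ξ₁ ξ₂ ξ₃ : Pt → ℝ) (X Y Z : VF) (p : Pt) : ℝ :=
  gm f (fun q => cov f X (phiV f ξ₁ ξ₂ ξ₃ Y) q - phiV f ξ₁ ξ₂ ξ₃ (cov f X Y) q) Z p

/-- The fundamental 2-form `Φ(X,Y) = g(φX, Y)`. -/
noncomputable def Phi2 (f ξ₁ ξ₂ ξ₃ : Pt → ℝ) (X Y : VF) : Pt → ℝ :=
  gm f (phiV f ξ₁ ξ₂ ξ₃ X) Y

/-- `dη(∂i,∂j) = (1/2)(∂i(η(∂j)) - ∂j(η(∂i)))` on coordinate fields. -/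
noncomputable def deta (f ξ₁ ξ₂ ξ₃ : Pt → ℝ) (i j : Fin 3) (p : Pt) : ℝ :=
  (1/2) * (dd (E i) (etaV f ξ₁ ξ₂ ξ₃ (E j)) p - dd (E j) (etaV f ξ₁ ξ₂ ξ₃ (E i)) p)

/-- `dη(X,Y) = (1/2)(X(η(Y)) - Y(η(X)) - η([X,Y]))` on general vector fields. -/
noncomputable def detaB (f ξ₁ ξ₂ ξ₃ : Pt → ℝ) (X Y : VF) (p : Pt) : ℝ :=
  (1/2) * (dd X (etaV f ξ₁ ξ₂ ξ₃ Y) p - dd Y (etaV f ξ₁ ξ₂ ξ₃ X) p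
    - etaV f ξ₁ ξ₂ ξ₃ (brk X Y) p)

/-- The Nijenhuis tensor `N(X,Y) = φ²[X,Y] + [φX,φY] - φ[φX,Y] - φ[X,φY]`. -/
noncomputable def nij (f ξ₁ ξ₂ ξ₃ : Pt → ℝ) (X Y : VF) : VF := fun p =>
  phiV f ξ₁ ξ₂ ξ₃ (phiV f ξ₁ ξ₂ ξ₃ (brk X Y)) p
    + brk (phiV f ξ₁ ξ₂ ξ₃ X) (phiV f ξ₁ ξ₂ ξ₃ Y) p
    - phiV f ξ₁ ξ₂ ξ₃ (brk (phiV f ξ₁ ξ₂ ξ₃ X) Y) p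
    - phiV f ξ₁ ξ₂ ξ₃ (brk X (phiV f ξ₁ ξ₂ ξ₃ Y)) p

/-- The curvature tensor, with the paper's sign convention
`R(X,Y)Z = ∇_{[X,Y]}Z - ∇_X∇_Y Z + ∇_Y∇_X Z`. -/
noncomputable def Rop (f : Pt → ℝ) (X Y Z : VF) : VF := fun p =>
  cov f (brk X Y) Z p - cov f X (cov f Y Z) p + cov f Y (cov f X Z) p

/-- Second partial derivatives of `f`. -/
noncomputable def fxx (f : Pt → ℝ) : Pt → ℝ := pdx (pdx f)
noncomputable def fxy (f : Pt → ℝ) : Pt → ℝ := pdy (pdx f)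
noncomputable def fyy (f : Pt → ℝ) : Pt → ℝ := pdy (pdy f)

/-- The Ricci tensor of the Walker metric: `ρ(∂x,∂z) = ρ(∂z,∂x) = (1/2) f_xx`,
`ρ(∂y,∂z) = ρ(∂z,∂y) = (1/2) f_xy`, `ρ(∂z,∂z) = (1/2)(f f_xx - f_yy)`, all other
components zero, extended tensorially. -/
noncomputable def rhoT (f : Pt → ℝ) (X Y : VF) (p : Pt) : ℝ :=
  (1/2) * fxx f p * (c1 (X p) * c3 (Y p) + c3 (X p) * c1 (Y p))
    + (1/2) * fxy f p * (c2 (X p) * c3 (Y p) + c3 (X p) * c2 (Y p))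
    + (1/2) * (f p * fxx f p - fyy f p) * (c3 (X p) * c3 (Y p))

/-- The Ricci operator: `Q∂x = (1/2)f_xx ∂x`, `Q∂y = (1/2)f_xy ∂x`,
`Q∂z = -(1/2)f_yy ∂x + (1/2)f_xy ∂y + (1/2)f_xx ∂z`. -/
noncomputable def Qop (f : Pt → ℝ) (X : VF) : VF := fun p =>
  ( (1/2) * fxx f p * c1 (X p) + (1/2) * fxy f p * c2 (X p) - (1/2) * fyy f p * c3 (X p),
    (1/2) * fxy f p * c3 (X p),
    (1/2) * fxx f p * c3 (X p) )

/-- `dΦ(∂x,∂y,∂z) = ∂x(Φ(∂y,∂z)) - ∂y(Φ(∂x,∂z)) + ∂z(Φ(∂x,∂y))`. -/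
noncomputable def dPhi (f ξ₁ ξ₂ ξ₃ : Pt → ℝ) (p : Pt) : ℝ :=
  pdx (Phi2 f ξ₁ ξ₂ ξ₃ (E 1) (E 2)) p - pdy (Phi2 f ξ₁ ξ₂ ξ₃ (E 0) (E 2)) p
    + pdz (Phi2 f ξ₁ ξ₂ ξ₃ (E 0) (E 1)) p

/-- `(η∧Φ)(∂x,∂y,∂z) = η(∂x)Φ(∂y,∂z) - η(∂y)Φ(∂x,∂z) + η(∂z)Φ(∂x,∂y)`. -/
noncomputable def etaWedgePhi (f ξ₁ ξ₂ ξ₃ : Pt → ℝ) (p : Pt) : ℝ :=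
  etaV f ξ₁ ξ₂ ξ₃ (E 0) p * Phi2 f ξ₁ ξ₂ ξ₃ (E 1) (E 2) p
    - etaV f ξ₁ ξ₂ ξ₃ (E 1) p * Phi2 f ξ₁ ξ₂ ξ₃ (E 0) (E 2) p
    + etaV f ξ₁ ξ₂ ξ₃ (E 2) p * Phi2 f ξ₁ ξ₂ ξ₃ (E 0) (E 1) p

/-- The constant function `0`. -/
noncomputable def zeroF : Pt → ℝ := fun _ => 0
/-- The constant function `1`. -/
noncomputable def oneF : Pt → ℝ := fun _ => 1
/-- The constant function `-1`. -/
noncomputable def negOneF : Pt → ℝ := fun _ => -1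

/-!
With `ξ₂ = 0` the 1-form is `η = ξ₃ dx + A dz` with `A = ξ₁ + f ξ₃`, and `dη = Φ` on coordinate
fields amounts to `∂y ξ₃ = -2 ξ₃`, `∂x A = ∂z ξ₃`, `∂y A = 2 ξ₁`. Differentiating the constraint,
written as `2 ξ₃ A = 1 + f ξ₃²`, turns the third equation into `∂y f = 0` and the second into an
equation in `f` and `ξ₃` alone. Integrating in `y` gives `ξ₃ = c(x,z) e^{-2y}` with `f` independent
of `y`. In the remaining equation `∂x c` then multiplies `e^{-2y}` while every other term carries
`e^{-6y}`, so `∂x c = 0`, and what is left says `∂x f = 2 ∂z log c`. Hence `ψ = log c`.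
-/

section Slices

variable {F : Pt → ℝ}

theorem hasDerivAt_pdx {x y z : ℝ} (hF : DifferentiableAt ℝ F (x, y, z)) :
    HasDerivAt (fun t => F (t, y, z)) (pdx F (x, y, z)) x :=
  hF.hasFDerivAt.comp_hasDerivAt x
    ((hasDerivAt_id x).prodMk ((hasDerivAt_const x y).prodMk (hasDerivAt_const x z)))

theorem hasDerivAt_pdy {x y z : ℝ} (hF : DifferentiableAt ℝ F (x, y, z)) :
    HasDerivAt (fun t => F (x, t, z)) (pdy F (x, y, z)) y :=
  hF.hasFDerivAt.comp_hasDerivAt y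
    ((hasDerivAt_const y x).prodMk ((hasDerivAt_id y).prodMk (hasDerivAt_const y z)))

theorem hasDerivAt_pdz {x y z : ℝ} (hF : DifferentiableAt ℝ F (x, y, z)) :
    HasDerivAt (fun t => F (x, y, t)) (pdz F (x, y, z)) z :=
  hF.hasFDerivAt.comp_hasDerivAt z
    ((hasDerivAt_const z x).prodMk ((hasDerivAt_const z y).prodMk (hasDerivAt_id z)))

theorem pdx_eq_mul_of_forall {x y z y' z' a : ℝ} (hF : Differentiable ℝ F)
    (h : ∀ t, F (t, y, z) = F (t, y', z') * a) : pdx F (x, y, z) = pdx F (x, y', z') * a :=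
  (hasDerivAt_pdx (hF _)).unique (funext h ▸ (hasDerivAt_pdx (hF _)).mul_const a)

theorem pdz_eq_mul_of_forall {x y z x' y' a : ℝ} (hF : Differentiable ℝ F)
    (h : ∀ t, F (x, y, t) = F (x', y', t) * a) : pdz F (x, y, z) = pdz F (x', y', z) * a :=
  (hasDerivAt_pdz (hF _)).unique (funext h ▸ (hasDerivAt_pdz (hF _)).mul_const a)

theorem apply_eq_of_pdx_eq {y z a : ℝ} (hF : Differentiable ℝ F)
    (h : ∀ t, pdx F (t, y, z) = a) (x : ℝ) : F (x, y, z) = a * x + F (0, y, z) := by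
  have hderiv (t : ℝ) : HasDerivAt (fun t => F (t, y, z) - a * t) 0 t := by
    simpa [h t] using (hasDerivAt_pdx (hF (t, y, z))).fun_sub ((hasDerivAt_id t).const_mul a)
  have := is_const_of_deriv_eq_zero (fun t => (hderiv t).differentiableAt)
    (fun t => (hderiv t).deriv) x 0
  simp only [mul_zero, sub_zero] at this
  linarith

theorem apply_eq_mul_exp_of_pdy_eq {x z c : ℝ} (hF : Differentiable ℝ F)
    (h : ∀ t, pdy F (x, t, z) = c * F (x, t, z)) (y : ℝ) :
    F (x, y, z) = F (x, 0, z) * exp (c * y) := by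
  have hderiv (t : ℝ) : HasDerivAt (fun t => F (x, t, z) * exp (-(c * t))) 0 t := by
    have := (hasDerivAt_pdy (hF (x, t, z))).fun_mul ((hasDerivAt_id t).const_mul c).neg.exp
    simpa [h t, mul_comm, mul_assoc, mul_left_comm] using this
  have := is_const_of_deriv_eq_zero (fun t => (hderiv t).differentiableAt)
    (fun t => (hderiv t).deriv) y 0
  simp only [mul_zero, neg_zero, exp_zero, mul_one] at this
  rw [← this, mul_assoc, ← exp_add, neg_add_cancel, exp_zero, mul_one]

end Slices

theorem deta_eq_Phi2_iff (f ξ₁ ξ₃ : Pt → ℝ) :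
    (∀ (i j : Fin 3) (p : Pt),
        deta f ξ₁ zeroF ξ₃ i j p = Phi2 f ξ₁ zeroF ξ₃ (E i) (E j) p) ↔
    ∀ p, pdy ξ₃ p = -2 * ξ₃ p ∧ pdx (fun q => ξ₁ q + f q * ξ₃ q) p = pdz ξ₃ p ∧
      pdy (fun q => ξ₁ q + f q * ξ₃ q) p = 2 * ξ₁ p := by
  have hη₀ : etaV f ξ₁ zeroF ξ₃ (fun _ => (1, 0, 0)) = ξ₃ := by
    funext; simp [etaV, c1, c2, c3, zeroF]
  have hη₁ : etaV f ξ₁ zeroF ξ₃ (fun _ => (0, 1, 0)) = 0 := by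
    funext; simp [etaV, c1, c2, c3, zeroF]
  have hη₂ : etaV f ξ₁ zeroF ξ₃ (fun _ => (0, 0, 1)) = fun q => ξ₁ q + f q * ξ₃ q := by
    funext; simp [etaV, c1, c2, c3, zeroF]
  constructor
  · intro H p
    have h01 := H 0 1 p
    have h02 := H 0 2 p
    have h12 := H 1 2 p
    simp only [deta, one_div, dd, E, Fin.isValue, Matrix.cons_val_one, Matrix.cons_val_zero, hη₁,
      fderiv_zero, Pi.zero_apply, Matrix.cons_val', Matrix.cons_val_fin_one, zero_apply, hη₀,
      zero_sub, mul_neg, Phi2, gm, c1, phiV, zeroF, neg_zero, mul_one, c2, mul_zero, add_zero, c3,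
      sub_self, sub_zero, zero_add, Matrix.cons_val, hη₂, mul_eq_zero, inv_eq_zero,
      OfNat.ofNat_ne_zero, false_or, add_neg_cancel_right] at h01 h02 h12
    simp only [pdx, pdy, pdz]
    exact ⟨by linarith, by linarith, by linarith⟩
  · intro H i j p
    obtain ⟨h1, h2, h3⟩ := H p
    simp only [pdx, pdy, pdz] at h1 h2 h3
    fin_cases i <;> fin_cases j <;>
      simp [deta, dd, hη₀, hη₁, hη₂, Phi2, gm, phiV, E, c1, c2, c3, zeroF, h1, h2, h3]

/-- The derivative of the constraint, written as `2 ξ₃ (ξ₁ + f ξ₃) - f ξ₃² = 1` so that `ξ₁` only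
enters through `η(∂z) = ξ₁ + f ξ₃`. -/
theorem constraint_fderiv {f ξ₁ ξ₃ : Pt → ℝ} {p : Pt} (hf : DifferentiableAt ℝ f p)
    (h1 : DifferentiableAt ℝ ξ₁ p) (h3 : DifferentiableAt ℝ ξ₃ p)
    (hconstr : ∀ q, f q * ξ₃ q ^ 2 + 2 * ξ₁ q * ξ₃ q = 1) (v : Pt) :
    2 * fderiv ℝ ξ₃ p v * (ξ₁ p + f p * ξ₃ p)
        + 2 * ξ₃ p * fderiv ℝ (fun q => ξ₁ q + f q * ξ₃ q) p v
      = fderiv ℝ f p v * ξ₃ p ^ 2 + 2 * f p * ξ₃ p * fderiv ℝ ξ₃ p v := by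
  have hA : DifferentiableAt ℝ (fun q => ξ₁ q + f q * ξ₃ q) p := h1.add (hf.mul h3)
  have hconst : (fun q => 2 * ξ₃ q * (ξ₁ q + f q * ξ₃ q) - f q * ξ₃ q ^ 2) = fun _ => 1 :=
    funext fun q => by linear_combination hconstr q
  have H := ((h3.hasFDerivAt.const_mul 2).fun_mul hA.hasFDerivAt).fun_sub
    (hf.hasFDerivAt.fun_mul (h3.hasFDerivAt.pow 2))
  rw [hconst] at H
  have := congrArg (· v) (H.unique (hasFDerivAt_const 1 p))
  simp only [Nat.add_one_sub_one, pow_one, nsmul_eq_mul, Nat.cast_ofNat, sub_apply, add_apply,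
    smul_apply, smul_eq_mul, zero_apply] at this
  linear_combination this

/-- The equations `dη = Φ` for `ξ₂ = 0` once `ξ₁` is eliminated through the constraint; they
involve only `f` and `u = ξ₃`. -/
def ParacontactSystem (f u : Pt → ℝ) : Prop :=
  ∀ p, pdy u p = -2 * u p ∧ pdy f p = 0 ∧
    pdx u p * (1 - f p * u p ^ 2) + 2 * u p ^ 2 * pdz u p = pdx f p * u p ^ 3

theorem pde_iff_paracontactSystem {f ξ₁ ξ₃ : Pt → ℝ} (hf : Differentiable ℝ f)
    (h1 : Differentiable ℝ ξ₁) (h3 : Differentiable ℝ ξ₃)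
    (hconstr : ∀ p, f p * ξ₃ p ^ 2 + 2 * ξ₁ p * ξ₃ p = 1) (hne : ∀ p, ξ₃ p ≠ 0) :
    (∀ p, pdy ξ₃ p = -2 * ξ₃ p ∧ pdx (fun q => ξ₁ q + f q * ξ₃ q) p = pdz ξ₃ p ∧
      pdy (fun q => ξ₁ q + f q * ξ₃ q) p = 2 * ξ₁ p) ↔ ParacontactSystem f ξ₃ := by
  refine forall_congr' fun p => ?_
  have dx := constraint_fderiv (hf p) (h1 p) (h3 p) hconstr (1, 0, 0)
  have dy := constraint_fderiv (hf p) (h1 p) (h3 p) hconstr (0, 1, 0)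
  simp only [← pdx.eq_1, ← pdy.eq_1] at dx dy
  have hx : 2 * ξ₃ p ^ 2 * (pdx (fun q => ξ₁ q + f q * ξ₃ q) p - pdz ξ₃ p)
      = pdx f p * ξ₃ p ^ 3 - (pdx ξ₃ p * (1 - f p * ξ₃ p ^ 2) + 2 * ξ₃ p ^ 2 * pdz ξ₃ p) := by
    linear_combination ξ₃ p * dx - pdx ξ₃ p * hconstr p
  have hy (h : pdy ξ₃ p = -2 * ξ₃ p) :
      2 * ξ₃ p * (pdy (fun q => ξ₁ q + f q * ξ₃ q) p - 2 * ξ₁ p) = pdy f p * ξ₃ p ^ 2 := by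
    linear_combination dy - 2 * ξ₁ p * h
  constructor
  · rintro ⟨hu, hAx, hAy⟩
    refine ⟨hu, ?_, ?_⟩
    · have h := hy hu
      rw [hAy, sub_self, mul_zero] at h
      exact (mul_eq_zero.1 h.symm).resolve_right (pow_ne_zero 2 (hne p))
    · rw [hAx, sub_self, mul_zero] at hx
      linarith
  · rintro ⟨hu, hfy, hX⟩
    refine ⟨hu, ?_, ?_⟩
    · rw [hX, sub_self] at hx
      simpa [hne p, sub_eq_zero] using hx
    · have h := hy hu
      rw [hfy, zero_mul] at h
      simpa [hne p, sub_eq_zero] using h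

theorem paracontactSystem_of_forall_eq {f u : Pt → ℝ} {ψ m : ℝ → ℝ} (hf : Differentiable ℝ f)
    (hu : Differentiable ℝ u) (hψ : Differentiable ℝ ψ)
    (hform : ∀ x y z, u (x, y, z) = exp (-2 * y + ψ z) ∧ f (x, y, z) = 2 * deriv ψ z * x + m z) :
    ParacontactSystem f u := by
  obtain rfl : u = fun p => exp (-2 * p.2.1 + ψ p.2.2) := funext fun p => (hform _ _ _).1
  obtain rfl : f = fun p => 2 * deriv ψ p.2.2 * p.1 + m p.2.2 := funext fun p => (hform _ _ _).2
  rintro ⟨x, y, z⟩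
  have hux : pdx _ (x, y, z) = 0 :=
    (hasDerivAt_pdx (hu _)).unique (hasDerivAt_const x (exp (-2 * y + ψ z)))
  have huy : pdy _ (x, y, z) = exp (-2 * y + ψ z) * -2 :=
    (hasDerivAt_pdy (hu _)).unique
      ((((hasDerivAt_id y).const_mul (-2)).add_const (ψ z)).exp.congr_deriv (by simp))
  have huz : pdz _ (x, y, z) = exp (-2 * y + ψ z) * deriv ψ z :=
    (hasDerivAt_pdz (hu _)).unique ((hψ z).hasDerivAt.const_add (-2 * y)).exp
  have hfx : pdx _ (x, y, z) = 2 * deriv ψ z :=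
    (hasDerivAt_pdx (hf _)).unique
      ((((hasDerivAt_id x).const_mul (2 * deriv ψ z)).add_const (m z)).congr_deriv (by simp))
  have hfy : pdy _ (x, y, z) = 0 :=
    (hasDerivAt_pdy (hf _)).unique (hasDerivAt_const y (2 * deriv ψ z * x + m z))
  refine ⟨by rw [huy]; ring, hfy, ?_⟩
  rw [hux, huz, hfx]
  ring

namespace ParacontactSystem

variable {f u : Pt → ℝ}

theorem apply_eq_mul_exp (H : ParacontactSystem f u) (hu : Differentiable ℝ u) (x y z : ℝ) :
    u (x, y, z) = u (x, 0, z) * exp (-2 * y) :=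
  apply_eq_mul_exp_of_pdy_eq hu (fun t => (H (x, t, z)).1) y

theorem f_apply_eq (H : ParacontactSystem f u) (hf : Differentiable ℝ f) (x y z : ℝ) :
    f (x, y, z) = f (x, 0, z) := by
  simpa using apply_eq_mul_exp_of_pdy_eq (c := 0) hf (fun t => by simp [(H (x, t, z)).2.1]) y

theorem pdx_eq_zero (H : ParacontactSystem f u) (hf : Differentiable ℝ f)
    (hu : Differentiable ℝ u) (x z : ℝ) : pdx u (x, 0, z) = 0 := by
  set e := exp (-2 * 1)
  have hux : pdx u (x, 1, z) = pdx u (x, 0, z) * e :=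
    pdx_eq_mul_of_forall hu fun t => H.apply_eq_mul_exp hu t 1 z
  have huz : pdz u (x, 1, z) = pdz u (x, 0, z) * e :=
    pdz_eq_mul_of_forall hu fun t => H.apply_eq_mul_exp hu x 1 t
  have hfx : pdx f (x, 1, z) = pdx f (x, 0, z) * 1 :=
    pdx_eq_mul_of_forall hf fun t => by rw [mul_one, H.f_apply_eq hf]
  have h₀ := (H (x, 0, z)).2.2
  have h₁ := (H (x, 1, z)).2.2
  rw [hux, huz, hfx, H.apply_eq_mul_exp hu x 1 z, H.f_apply_eq hf x 1 z] at h₁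
  have he₀ : 0 < e := exp_pos _
  have he₁ : e < 1 := exp_lt_one_iff.mpr (by norm_num)
  have h : pdx u (x, 0, z) * (e * (1 - e ^ 2)) = 0 := by linear_combination h₁ - e ^ 3 * h₀
  exact (mul_eq_zero.1 h).resolve_right (by nlinarith)

theorem apply_zero_eq (H : ParacontactSystem f u) (hf : Differentiable ℝ f)
    (hu : Differentiable ℝ u) (x z : ℝ) : u (x, 0, z) = u (0, 0, z) := by
  simpa using apply_eq_of_pdx_eq hu (fun t => H.pdx_eq_zero hf hu t z) x

theorem pdx_f_eq (H : ParacontactSystem f u) (hf : Differentiable ℝ f)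
    (hu : Differentiable ℝ u) (hne : ∀ p, u p ≠ 0) (x z : ℝ) :
    pdx f (x, 0, z) = 2 * (pdz u (0, 0, z) / u (0, 0, z)) := by
  have huz : pdz u (x, 0, z) = pdz u (0, 0, z) * 1 :=
    pdz_eq_mul_of_forall hu fun t => by rw [mul_one, H.apply_zero_eq hf hu]
  have h := (H (x, 0, z)).2.2
  rw [H.pdx_eq_zero hf hu, huz, H.apply_zero_eq hf hu] at h
  rw [mul_div_assoc', eq_div_iff (hne _)]
  refine mul_left_cancel₀ (pow_ne_zero 2 (hne (0, 0, z))) ?_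
  linear_combination -h

theorem exists_eq_exp (H : ParacontactSystem f u) (hf : ContDiff ℝ (⊤ : ℕ∞) f)
    (hu : ContDiff ℝ (⊤ : ℕ∞) u) (hpos : ∀ p, 0 < u p) :
    ∃ ψ m : ℝ → ℝ, ContDiff ℝ (⊤ : ℕ∞) ψ ∧ ContDiff ℝ (⊤ : ℕ∞) m ∧
      ∀ x y z : ℝ, u (x, y, z) = exp (-2 * y + ψ z) ∧ f (x, y, z) = 2 * deriv ψ z * x + m z := by
  have hfd : Differentiable ℝ f := hf.differentiable (by simp)
  have hud : Differentiable ℝ u := hu.differentiable (by simp)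
  have hι : ContDiff ℝ (⊤ : ℕ∞) (fun z : ℝ => ((0 : ℝ), (0 : ℝ), z)) :=
    contDiff_const.prodMk (contDiff_const.prodMk contDiff_id)
  have hψ (z : ℝ) : deriv (fun z => log (u (0, 0, z))) z = pdz u (0, 0, z) / u (0, 0, z) :=
    ((hasDerivAt_pdz (hud _)).log (hpos _).ne').deriv
  refine ⟨fun z => log (u (0, 0, z)), fun z => f (0, 0, z),
    (hu.comp hι).log fun z => (hpos _).ne', hf.comp hι, fun x y z => ⟨?_, ?_⟩⟩
  · rw [H.apply_eq_mul_exp hud, H.apply_zero_eq hfd hud, exp_add, exp_log (hpos _), mul_comm]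
  · rw [H.f_apply_eq hfd, hψ]
    exact apply_eq_of_pdx_eq hfd (fun t => H.pdx_f_eq hfd hud (fun p => (hpos p).ne') t z) x

end ParacontactSystem

/-- Theorem 4.2: an almost paracontact metric 3-dimensional Walker manifold with
`ξ₂ ≡ 0` (and `ξ₃ > 0`) is paracontact metric iff `ξ₃ = exp(-2y + ψ(z))` and
`f = 2ψ'(z)·x + m(z)` for some smooth functions `ψ, m : ℝ → ℝ`. -/
theorem paracontact_metric_iff (f ξ₁ ξ₃ : Pt → ℝ)
    (hf : ContDiff ℝ (⊤ : ℕ∞) f) (h1 : ContDiff ℝ (⊤ : ℕ∞) ξ₁)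
    (h3 : ContDiff ℝ (⊤ : ℕ∞) ξ₃)
    (hconstr : ∀ p : Pt, f p * ξ₃ p ^ 2 + 2 * ξ₁ p * ξ₃ p = 1)
    (hpos : ∀ p : Pt, 0 < ξ₃ p) :
    (∀ (i j : Fin 3) (p : Pt),
        deta f ξ₁ zeroF ξ₃ i j p = Phi2 f ξ₁ zeroF ξ₃ (E i) (E j) p) ↔
    ∃ ψ m : ℝ → ℝ, ContDiff ℝ (⊤ : ℕ∞) ψ ∧ ContDiff ℝ (⊤ : ℕ∞) m ∧
      ∀ x y z : ℝ, ξ₃ (x, y, z) = Real.exp (-2 * y + ψ z) ∧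
        f (x, y, z) = 2 * deriv ψ z * x + m z := by
  have hfd : Differentiable ℝ f := hf.differentiable (by simp)
  have h3d : Differentiable ℝ ξ₃ := h3.differentiable (by simp)
  rw [deta_eq_Phi2_iff, pde_iff_paracontactSystem hfd (h1.differentiable (by simp)) h3d hconstr
    fun p => (hpos p).ne']
  refine ⟨fun H => H.exists_eq_exp hf h3 hpos, ?_⟩
  rintro ⟨ψ, m, hψ, -, hform⟩
  exact paracontactSystem_of_forall_eq hfd h3d (hψ.differentiable (by simp)) hform
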